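/- arXiv:1311.1873 — 4 statements merged into one kernel-verified Lean document; each statement's English description precedes it below -/
import Mathlib

section
/- Under the AsySCD iteration, suppose ρ > 1 and define ψ = 1 + 2τρ^τ L_res/(√n · L_max). If the steplength parameter γ > 0 satisfies the three bounds γ ≤ 1/ψ, γ ≤ (ρ − 1)√n · L_max/(2ρ^{τ+1} L_res), and γ ≤ (ρ − 1)√n · L_max/(L_res ρ^τ (2 + L_res/(√n · L_max))), then for every j ≥ 0, ρ^{-1} E(‖∇f(x_j)‖²) ≤ E(‖∇f(x_{j+1})‖²) ≤ ρ · E(‖∇f(x_j)‖²). -/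
/-!
Write `E_j = E ‖∇f(x_j)‖²`. Since `x_j` is a function of the finitely many indices
`i(0), …, i(j-1)`, every random variable involved is finitely valued, hence integrable, and the
fresh index `i(j)` is independent of it. So `E_{j+1}` is the expectation of the average over `i` of
`‖∇f(x_j - c ∇_i f(x_{k(j)}) e_i)‖²`, with `c = γ / L_max`. Along coordinate `i` the restricted
Lipschitz bound moves `‖∇f‖` by at most `L_res c |∇_i f(x_{k(j)})|`; averaging over `i` and using
AM-GM gives, with `a = L_res c / √n`,
`(1 - a) E_j - a E_{k(j)} ≤ E_{j+1} ≤ (1 + a) E_j + (a + a²) E_{k(j)}`.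
By strong induction the lower bounds at earlier steps give `E_{k(j)} ≤ ρ^τ E_j`, and the step
size condition `2 ρ^{τ+1} a ≤ ρ - 1` turns the two estimates into the ratio bounds.
-/

open MeasureTheory ProbabilityTheory Real ENNReal

section CoordinateStep

lemma sq_le_of_abs_sub_le {G G' a s w : ℝ} (hG : 0 ≤ G) (ha : 0 ≤ a) (h : |G' - G| ≤ a * s * w) :
    G' ^ 2 ≤ (1 + a) * G ^ 2 + s ^ 2 * (a + a ^ 2) * w ^ 2 := by
  obtain ⟨h1, h2⟩ := abs_le.mp h
  have hsq : G' ^ 2 ≤ (G + a * s * w) ^ 2 := sq_le_sq' (by linarith) (by linarith)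
  nlinarith [mul_nonneg ha (sq_nonneg (G - s * w))]

lemma le_sq_of_abs_sub_le {G G' a s w : ℝ} (hG : 0 ≤ G) (ha : 0 ≤ a) (h : |G' - G| ≤ a * s * w) :
    (1 - a) * G ^ 2 - s ^ 2 * a * w ^ 2 ≤ G' ^ 2 := by
  obtain ⟨h1, h2⟩ := abs_le.mp h
  have hsq : G ^ 2 - 2 * G * (a * s * w) ≤ G' ^ 2 := by
    rcases le_or_gt G (a * s * w) with hD | hD
    · nlinarith [sq_nonneg G']
    · nlinarith [sq_le_sq' (by linarith : -G' ≤ G - a * s * w) (by linarith : G - a * s * w ≤ G')]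
  nlinarith [mul_nonneg ha (sq_nonneg (G - s * w))]

variable {ι : Type*} [Fintype ι] [DecidableEq ι] {F : EuclideanSpace ℝ ι → EuclideanSpace ℝ ι}
  {L : ℝ}

lemma abs_norm_sub_single_sub_norm_le
    (hF : ∀ z i t, ‖F z - F (z + EuclideanSpace.single i t)‖ ≤ L * |t|)
    (y : EuclideanSpace ℝ ι) (i : ι) (s : ℝ) :
    |‖F (y - EuclideanSpace.single i s)‖ - ‖F y‖| ≤ L * |s| := by
  calc |‖F (y - EuclideanSpace.single i s)‖ - ‖F y‖|
      ≤ ‖F y - F (y + EuclideanSpace.single i (-s))‖ := by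
        rw [abs_sub_comm, show EuclideanSpace.single i (-s) = -EuclideanSpace.single i s from
          PiLp.single_neg 2 i, ← sub_eq_add_neg]
        exact abs_norm_sub_norm_le _ _
    _ ≤ L * |s| := by simpa only [abs_neg] using hF y i (-s)

variable {c a : ℝ}

lemma abs_norm_sub_single_mul_sub_norm_le
    (hF : ∀ z i t, ‖F z - F (z + EuclideanSpace.single i t)‖ ≤ L * |t|)
    (hLa : L * |c| ≤ a * √(Fintype.card ι)) (y v : EuclideanSpace ℝ ι) (i : ι) :
    |‖F (y - EuclideanSpace.single i (c * v i))‖ - ‖F y‖| ≤ a * √(Fintype.card ι) * |v i| :=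
  (abs_norm_sub_single_sub_norm_le hF y i _).trans <| by
    rw [abs_mul, ← mul_assoc]
    exact mul_le_mul_of_nonneg_right hLa (abs_nonneg _)

lemma mean_sq_norm_sub_single_le [Nonempty ι]
    (hF : ∀ z i t, ‖F z - F (z + EuclideanSpace.single i t)‖ ≤ L * |t|)
    (ha : 0 ≤ a) (hLa : L * |c| ≤ a * √(Fintype.card ι)) (y v : EuclideanSpace ℝ ι) :
    (Fintype.card ι : ℝ)⁻¹ * ∑ i, ‖F (y - EuclideanSpace.single i (c * v i))‖ ^ 2
      ≤ (1 + a) * ‖F y‖ ^ 2 + (a + a ^ 2) * ‖v‖ ^ 2 := by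
  have hN : (0 : ℝ) < Fintype.card ι := by exact_mod_cast Fintype.card_pos
  calc (Fintype.card ι : ℝ)⁻¹ * ∑ i, ‖F (y - EuclideanSpace.single i (c * v i))‖ ^ 2
      ≤ (Fintype.card ι : ℝ)⁻¹ * ∑ i, ((1 + a) * ‖F y‖ ^ 2
          + √(Fintype.card ι) ^ 2 * (a + a ^ 2) * |v i| ^ 2) := by
        gcongr with i
        exact sq_le_of_abs_sub_le (norm_nonneg _) ha
          (abs_norm_sub_single_mul_sub_norm_le hF hLa y v i)
    _ = (1 + a) * ‖F y‖ ^ 2 + (a + a ^ 2) * ‖v‖ ^ 2 := by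
        simp only [sq_abs, Real.sq_sqrt hN.le, Finset.sum_add_distrib, Finset.sum_const,
          Finset.card_univ, nsmul_eq_mul, ← Finset.mul_sum, EuclideanSpace.real_norm_sq_eq]
        field_simp

lemma le_mean_sq_norm_sub_single [Nonempty ι]
    (hF : ∀ z i t, ‖F z - F (z + EuclideanSpace.single i t)‖ ≤ L * |t|)
    (ha : 0 ≤ a) (hLa : L * |c| ≤ a * √(Fintype.card ι)) (y v : EuclideanSpace ℝ ι) :
    (1 - a) * ‖F y‖ ^ 2 - a * ‖v‖ ^ 2
      ≤ (Fintype.card ι : ℝ)⁻¹ * ∑ i, ‖F (y - EuclideanSpace.single i (c * v i))‖ ^ 2 := by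
  have hN : (0 : ℝ) < Fintype.card ι := by exact_mod_cast Fintype.card_pos
  calc (1 - a) * ‖F y‖ ^ 2 - a * ‖v‖ ^ 2
      = (Fintype.card ι : ℝ)⁻¹ * ∑ i, ((1 - a) * ‖F y‖ ^ 2
          - √(Fintype.card ι) ^ 2 * a * |v i| ^ 2) := by
        simp only [sq_abs, Real.sq_sqrt hN.le, Finset.sum_sub_distrib, Finset.sum_const,
          Finset.card_univ, nsmul_eq_mul, ← Finset.mul_sum, EuclideanSpace.real_norm_sq_eq]
        field_simp
    _ ≤ (Fintype.card ι : ℝ)⁻¹ * ∑ i, ‖F (y - EuclideanSpace.single i (c * v i))‖ ^ 2 := by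
        gcongr with i
        exact le_sq_of_abs_sub_le (norm_nonneg _) ha
          (abs_norm_sub_single_mul_sub_norm_le hF hLa y v i)

end CoordinateStep

section FiniteValued

variable {Ω : Type*} [MeasurableSpace Ω] {μ : Measure Ω} [IsFiniteMeasure μ]
  {β : Type*} [MeasurableSpace β] [MeasurableSingletonClass β] {Z : Ω → β}

lemma integrable_comp_of_finite {E : Type*} [NormedAddCommGroup E] [Finite β]
    (hZ : Measurable Z) (φ : β → E) :
    Integrable (fun ω => φ (Z ω)) μ :=
  Integrable.of_finite.comp_measurable hZ

lemma integral_comp_eq_sum [Fintype β] (hZ : Measurable Z) (φ : β → ℝ) :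
    ∫ ω, φ (Z ω) ∂μ = ∑ b, μ.real (Z ⁻¹' {b}) * φ b := by
  rw [← integral_map hZ.aemeasurable (measurable_of_finite φ).aestronglyMeasurable,
    integral_fintype Integrable.of_finite]
  simp only [map_measureReal_apply hZ (measurableSet_singleton _), smul_eq_mul]

variable {ι : Type*} [Fintype ι] [MeasurableSpace ι] [MeasurableSingletonClass ι] {I : Ω → ι}

lemma ProbabilityTheory.IndepFun.integral_comp_eq_integral_mean [Fintype β] (hind : IndepFun Z I μ)
    (hZ : Measurable Z) (hI : Measurable I)
    (hunif : ∀ i, μ (I ⁻¹' {i}) = (Fintype.card ι : ℝ≥0∞)⁻¹) (Φ : β → ι → ℝ) :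
    ∫ ω, Φ (Z ω) (I ω) ∂μ = ∫ ω, (Fintype.card ι : ℝ)⁻¹ * ∑ i, Φ (Z ω) i ∂μ := by
  have hpair := integral_comp_eq_sum (μ := μ) (hZ.prodMk hI) (fun p => Φ p.1 p.2)
  have hmean := integral_comp_eq_sum (μ := μ) hZ
    (fun b => (Fintype.card ι : ℝ)⁻¹ * ∑ i, Φ b i)
  dsimp only at hpair hmean
  rw [hpair, hmean, Fintype.sum_prod_type]
  refine Finset.sum_congr rfl fun b _ => ?_
  rw [Finset.mul_sum, Finset.mul_sum]
  refine Finset.sum_congr rfl fun i _ => ?_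
  have hprod : (fun ω => (Z ω, I ω)) ⁻¹' {(b, i)} = Z ⁻¹' {b} ∩ I ⁻¹' {i} := by
    ext ω; simp [Prod.ext_iff]
  rw [hprod, measureReal_def, hind.measure_inter_preimage_eq_mul _ _ (measurableSet_singleton b)
    (measurableSet_singleton i), hunif, ENNReal.toReal_mul, ← measureReal_def]
  simp only [ENNReal.toReal_inv, ENNReal.toReal_natCast]
  ring

end FiniteValued

lemma ProbabilityTheory.iIndepFun.indepFun_history {Ω β : Type*} [MeasurableSpace Ω] {μ : Measure Ω}
    [MeasurableSpace β] {f : ℕ → Ω → β} (h : iIndepFun f μ) (hf : ∀ i, Measurable (f i))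
    (j : ℕ) : IndepFun (fun ω (l : Fin j) => f l ω) (f j) μ := by
  have hdisj : Disjoint (Finset.range j) {j} := by simp
  have hrestrict : Measurable fun (w : Finset.range j → β) (l : Fin j) =>
      w ⟨l, Finset.mem_range.mpr l.2⟩ :=
    measurable_pi_lambda _ fun _ => measurable_pi_apply _
  have heval : Measurable fun (w : ({j} : Finset ℕ) → β) => w ⟨j, Finset.mem_singleton_self j⟩ :=
    measurable_pi_apply _
  exact (h.indepFun_finset _ _ hdisj hf).comp hrestrict heval

lemma exists_eq_comp_history {Ω α ι : Type*} {idx : ℕ → Ω → ι} {x : ℕ → Ω → α} {k : ℕ → ℕ}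
    (hk : ∀ j, k j ≤ j) (U : ℕ → α → α → ι → α) {x0 : α} (hx0 : ∀ ω, x 0 ω = x0)
    (hx : ∀ j ω, x (j + 1) ω = U j (x j ω) (x (k j) ω) (idx j ω)) {j m : ℕ} (hm : m ≤ j) :
    ∃ g : (Fin j → ι) → α, ∀ ω, x m ω = g (fun l => idx l ω) := by
  induction m using Nat.strong_induction_on with
  | _ m ih =>
    cases m with
    | zero => exact ⟨fun _ => x0, hx0⟩
    | succ m =>
      obtain ⟨g, hg⟩ := ih m (by omega) (by omega)
      obtain ⟨g', hg'⟩ := ih (k m) (by have := hk m; omega) (by have := hk m; omega)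
      exact ⟨fun b => U m (g b) (g' b) (b ⟨m, by omega⟩), fun ω => by rw [hx, hg, hg']⟩

section AsyncIteration

variable {Ω : Type*} [MeasurableSpace Ω] {μ : Measure Ω} [IsFiniteMeasure μ]
  {ι : Type*} [Fintype ι] [Nonempty ι] [DecidableEq ι] [MeasurableSpace ι]
  [MeasurableSingletonClass ι] {F : EuclideanSpace ℝ ι → EuclideanSpace ℝ ι} {L c a : ℝ}
  {idx : ℕ → Ω → ι} {k : ℕ → ℕ} {x : ℕ → Ω → EuclideanSpace ℝ ι} {x0 : EuclideanSpace ℝ ι}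

lemma integral_sq_norm_succ_bounds
    (hF : ∀ z i t, ‖F z - F (z + EuclideanSpace.single i t)‖ ≤ L * |t|)
    (ha : 0 ≤ a) (hLa : L * |c| ≤ a * √(Fintype.card ι))
    (hmeas : ∀ j, Measurable (idx j))
    (hunif : ∀ j i, μ (idx j ⁻¹' {i}) = (Fintype.card ι : ℝ≥0∞)⁻¹)
    (hindep : iIndepFun idx μ) (hk : ∀ j, k j ≤ j) (hx0 : ∀ ω, x 0 ω = x0)
    (hx : ∀ j ω, x (j + 1) ω =
      x j ω - EuclideanSpace.single (idx j ω) (c * F (x (k j) ω) (idx j ω)))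
    (j : ℕ) :
    ∫ ω, ‖F (x (j + 1) ω)‖ ^ 2 ∂μ
        ≤ (1 + a) * ∫ ω, ‖F (x j ω)‖ ^ 2 ∂μ + (a + a ^ 2) * ∫ ω, ‖F (x (k j) ω)‖ ^ 2 ∂μ ∧
      (1 - a) * ∫ ω, ‖F (x j ω)‖ ^ 2 ∂μ - a * ∫ ω, ‖F (x (k j) ω)‖ ^ 2 ∂μ
        ≤ ∫ ω, ‖F (x (j + 1) ω)‖ ^ 2 ∂μ := by
  set Z : Ω → Fin j → ι := fun ω l => idx l ω
  have hZ : Measurable Z := measurable_pi_lambda _ fun l => hmeas l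
  have hint (φ : (Fin j → ι) → ℝ) : Integrable (fun ω => φ (Z ω)) μ :=
    integrable_comp_of_finite hZ φ
  have hist {m : ℕ} (hm : m ≤ j) : ∃ g : (Fin j → ι) → _, ∀ ω, x m ω = g (Z ω) :=
    exists_eq_comp_history (idx := idx) hk
      (fun _ y z i => y - EuclideanSpace.single i (c * F z i)) hx0 hx hm
  obtain ⟨y, hy⟩ := hist le_rfl
  obtain ⟨v, hv⟩ := hist (hk j)
  set G : (Fin j → ι) → ℝ := fun b => ‖F (y b)‖ ^ 2
  set V : (Fin j → ι) → ℝ := fun b => ‖F (v b)‖ ^ 2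
  set M : (Fin j → ι) → ℝ := fun b => (Fintype.card ι : ℝ)⁻¹ *
    ∑ i, ‖F (y b - EuclideanSpace.single i (c * F (v b) i))‖ ^ 2
  have hmean : ∫ ω, ‖F (x (j + 1) ω)‖ ^ 2 ∂μ = ∫ ω, M (Z ω) ∂μ := by
    simp_rw [hx, hy, hv]
    exact (hindep.indepFun_history hmeas j).integral_comp_eq_integral_mean hZ (hmeas j)
      (hunif j) fun b i => ‖F (y b - EuclideanSpace.single i (c * F (v b) i))‖ ^ 2
  have hG : ∫ ω, ‖F (x j ω)‖ ^ 2 ∂μ = ∫ ω, G (Z ω) ∂μ := by simp_rw [hy]; rfl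
  have hV : ∫ ω, ‖F (x (k j) ω)‖ ^ 2 ∂μ = ∫ ω, V (Z ω) ∂μ := by simp_rw [hv]; rfl
  rw [hmean, hG, hV]
  constructor
  · calc ∫ ω, M (Z ω) ∂μ ≤ ∫ ω, ((1 + a) * G (Z ω) + (a + a ^ 2) * V (Z ω)) ∂μ :=
          integral_mono (hint M) (((hint G).const_mul _).add ((hint V).const_mul _))
            fun ω => mean_sq_norm_sub_single_le hF ha hLa _ _
      _ = _ := by
          rw [integral_add ((hint G).const_mul _) ((hint V).const_mul _), integral_const_mul,
            integral_const_mul]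
  · calc (1 - a) * ∫ ω, G (Z ω) ∂μ - a * ∫ ω, V (Z ω) ∂μ
        = ∫ ω, ((1 - a) * G (Z ω) - a * V (Z ω)) ∂μ := by
          rw [integral_sub ((hint G).const_mul _) ((hint V).const_mul _), integral_const_mul,
            integral_const_mul]
      _ ≤ ∫ ω, M (Z ω) ∂μ :=
          integral_mono (((hint G).const_mul _).sub ((hint V).const_mul _)) (hint M)
            fun ω => le_mean_sq_norm_sub_single hF ha hLa _ _

end AsyncIteration

section DelayedRecursion

variable {ρ a : ℝ} {τ : ℕ}

lemma inv_le_one_sub_sub_of_two_mul_pow_succ_mul_le (hρ : 1 < ρ) (ha : 0 ≤ a)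
    (h : 2 * ρ ^ (τ + 1) * a ≤ ρ - 1) : ρ⁻¹ ≤ 1 - a - a * ρ ^ τ := by
  have hpow : 1 ≤ ρ ^ τ := one_le_pow₀ hρ.le
  rw [pow_succ] at h
  rw [inv_le_iff_one_le_mul₀' (by linarith)]
  nlinarith [le_mul_of_one_le_right ha hpow]

lemma one_add_add_mul_pow_le_of_two_mul_pow_succ_mul_le (hρ : 1 < ρ) (ha : 0 ≤ a)
    (h : 2 * ρ ^ (τ + 1) * a ≤ ρ - 1) : 1 + a + (a + a ^ 2) * ρ ^ τ ≤ ρ := by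
  have hpow : 1 ≤ ρ ^ τ := one_le_pow₀ hρ.le
  rw [pow_succ] at h
  have hA2 : a ^ 2 * ρ ^ τ ≤ (a * ρ ^ τ) ^ 2 := by
    nlinarith [mul_nonneg (sq_nonneg a) (sub_nonneg.2 hpow)]
  nlinarith [le_mul_of_one_le_right ha hpow, mul_nonneg ha (by positivity : (0:ℝ) ≤ ρ ^ τ),
    mul_nonneg (sub_nonneg.2 hρ.le) (sub_nonneg.2 hρ.le)]

lemma le_pow_sub_mul_of_le_mul_succ {E : ℕ → ℝ} (hρ : 0 ≤ ρ) {j : ℕ}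
    (h : ∀ m < j, E m ≤ ρ * E (m + 1)) {m : ℕ} (hm : m ≤ j) : E m ≤ ρ ^ (j - m) * E j := by
  induction hm using Nat.decreasingInduction with
  | self => simp
  | of_succ m hmj ih =>
    calc E m ≤ ρ * E (m + 1) := h m hmj
      _ ≤ ρ * (ρ ^ (j - (m + 1)) * E j) := mul_le_mul_of_nonneg_left ih hρ
      _ = ρ ^ (j - m) * E j := by
        rw [← mul_assoc, ← pow_succ', Nat.sub_add_eq, Nat.sub_add_cancel (by omega)]

theorem ratio_bounds_of_delayed_recursion {E : ℕ → ℝ} {k : ℕ → ℕ} (hρ : 1 < ρ) (ha : 0 ≤ a)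
    (h : 2 * ρ ^ (τ + 1) * a ≤ ρ - 1) (hk : ∀ j, k j ≤ j ∧ j ≤ k j + τ) (hE : ∀ j, 0 ≤ E j)
    (hup : ∀ j, E (j + 1) ≤ (1 + a) * E j + (a + a ^ 2) * E (k j))
    (hlo : ∀ j, (1 - a) * E j - a * E (k j) ≤ E (j + 1)) :
    ∀ j, ρ⁻¹ * E j ≤ E (j + 1) ∧ E (j + 1) ≤ ρ * E j := by
  have hρ0 : 0 < ρ := by linarith
  intro j
  induction j using Nat.strong_induction_on with
  | _ j ih =>
    have hback : ∀ m < j, E m ≤ ρ * E (m + 1) := fun m hm =>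
      (inv_mul_le_iff₀ hρ0).mp (ih m hm).1
    have hdelay : E (k j) ≤ ρ ^ τ * E j :=
      (le_pow_sub_mul_of_le_mul_succ hρ0.le hback (hk j).1).trans <|
        mul_le_mul_of_nonneg_right (pow_le_pow_right₀ hρ.le (by have := hk j; omega)) (hE j)
    constructor
    · calc ρ⁻¹ * E j ≤ (1 - a - a * ρ ^ τ) * E j :=
            mul_le_mul_of_nonneg_right
              (inv_le_one_sub_sub_of_two_mul_pow_succ_mul_le hρ ha h) (hE j)
        _ ≤ (1 - a) * E j - a * E (k j) := by nlinarith [mul_le_mul_of_nonneg_left hdelay ha]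
        _ ≤ E (j + 1) := hlo j
    · calc E (j + 1) ≤ (1 + a) * E j + (a + a ^ 2) * E (k j) := hup j
        _ ≤ (1 + a + (a + a ^ 2) * ρ ^ τ) * E j := by
            nlinarith [mul_le_mul_of_nonneg_left hdelay (by positivity : 0 ≤ a + a ^ 2)]
        _ ≤ ρ * E j := mul_le_mul_of_nonneg_right
            (one_add_add_mul_pow_le_of_two_mul_pow_succ_mul_le hρ ha h) (hE j)

end DelayedRecursion

theorem asyscd_gradient_ratio_bounds_general
    {n : ℕ} (hn : 0 < n)
    (f : EuclideanSpace ℝ (Fin n) → ℝ)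
    (Lres Lmax : ℝ) (hLres_pos : 0 < Lres) (hLmax_pos : 0 < Lmax)
    (hLres : ∀ (z : EuclideanSpace ℝ (Fin n)) (i : Fin n) (t : ℝ),
      ‖gradient f z - gradient f (z + EuclideanSpace.single i t)‖ ≤ Lres * |t|)
    {Ω : Type} [MeasureSpace Ω] [IsProbabilityMeasure (ℙ : Measure Ω)]
    (idx : ℕ → Ω → Fin n) (hidx_meas : ∀ j, Measurable (idx j))
    (hidx_unif : ∀ j i, ℙ {ω | idx j ω = i} = (n : ℝ≥0∞)⁻¹)
    (hidx_indep : iIndepFun idx ℙ)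
    (τ : ℕ) (k : ℕ → ℕ) (hk : ∀ j, k j ≤ j ∧ j ≤ k j + τ)
    (γ : ℝ) (hγ_pos : 0 < γ)
    (x0 : EuclideanSpace ℝ (Fin n))
    (x : ℕ → Ω → EuclideanSpace ℝ (Fin n))
    (hx0 : ∀ ω, x 0 ω = x0)
    (hxiter : ∀ j ω, x (j+1) ω =
      x j ω - EuclideanSpace.single (idx j ω) (γ / Lmax * gradient f (x (k j) ω) (idx j ω)))
    (ρ : ℝ) (hρ : 1 < ρ)
    (hγ2 : γ ≤ (ρ - 1) * Real.sqrt n * Lmax / (2 * ρ ^ (τ + 1) * Lres)) :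
    ∀ j : ℕ,
      ρ⁻¹ * (∫ ω, ‖gradient f (x j ω)‖ ^ 2) ≤ (∫ ω, ‖gradient f (x (j+1) ω)‖ ^ 2) ∧
      (∫ ω, ‖gradient f (x (j+1) ω)‖ ^ 2) ≤ ρ * (∫ ω, ‖gradient f (x j ω)‖ ^ 2) := by
  have : Nonempty (Fin n) := ⟨⟨0, hn⟩⟩
  have hsqrt : 0 < √(n : ℝ) := Real.sqrt_pos.2 (by exact_mod_cast hn)
  set a := Lres * (γ / Lmax) / √n
  have ha : 0 ≤ a := by positivity
  have hLa : Lres * |γ / Lmax| ≤ a * √(Fintype.card (Fin n)) := by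
    rw [Fintype.card_fin, abs_of_pos (by positivity), div_mul_cancel₀ _ hsqrt.ne']
  have haρ : 2 * ρ ^ (τ + 1) * a ≤ ρ - 1 := by
    rw [le_div_iff₀ (by positivity)] at hγ2
    rw [show 2 * ρ ^ (τ + 1) * a = γ * (2 * ρ ^ (τ + 1) * Lres) / (Lmax * √n) by
      simp only [a]; field_simp, div_le_iff₀ (by positivity)]
    linarith
  have step := integral_sq_norm_succ_bounds hLres ha hLa hidx_meas
    (fun j i => by rw [Fintype.card_fin]; exact hidx_unif j i) hidx_indep (fun j => (hk j).1)
    hx0 hxiter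
  exact ratio_bounds_of_delayed_recursion hρ ha haρ hk
    (fun j => integral_nonneg fun ω => sq_nonneg _) (fun j => (step j).1) (fun j => (step j).2)

theorem asyscd_gradient_ratio_bounds
    {n : ℕ} (hn : 0 < n)
    (f : EuclideanSpace ℝ (Fin n) → ℝ)
    (hf_smooth : ContDiff ℝ 1 f)
    (hf_conv : ConvexOn ℝ Set.univ f)
    (S : Set (EuclideanSpace ℝ (Fin n)))
    (hS : S = {z | ∀ y, f z ≤ f y}) (hS_ne : S.Nonempty)
    (fstar : ℝ) (hfstar : ∀ z ∈ S, f z = fstar)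
    (Lres Lmax : ℝ) (hLres_pos : 0 < Lres) (hLmax_pos : 0 < Lmax)
    (hLres : ∀ (z : EuclideanSpace ℝ (Fin n)) (i : Fin n) (t : ℝ),
      ‖gradient f z - gradient f (z + EuclideanSpace.single i t)‖ ≤ Lres * |t|)
    (Li : Fin n → ℝ)
    (hLi : ∀ (z : EuclideanSpace ℝ (Fin n)) (i : Fin n) (t : ℝ),
      |gradient f z i - gradient f (z + EuclideanSpace.single i t) i| ≤ Li i * |t|)
    (hLmax : IsGreatest (Set.range Li) Lmax)
    {Ω : Type} [MeasureSpace Ω] [IsProbabilityMeasure (ℙ : Measure Ω)]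
    (idx : ℕ → Ω → Fin n) (hidx_meas : ∀ j, Measurable (idx j))
    (hidx_unif : ∀ j i, ℙ {ω | idx j ω = i} = (n : ℝ≥0∞)⁻¹)
    (hidx_indep : iIndepFun idx ℙ)
    (τ : ℕ) (k : ℕ → ℕ) (hk : ∀ j, k j ≤ j ∧ j ≤ k j + τ)
    (γ : ℝ) (hγ_pos : 0 < γ)
    (x0 : EuclideanSpace ℝ (Fin n))
    (x : ℕ → Ω → EuclideanSpace ℝ (Fin n))
    (hx0 : ∀ ω, x 0 ω = x0)
    (hxiter : ∀ j ω, x (j+1) ω =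
      x j ω - EuclideanSpace.single (idx j ω) (γ / Lmax * gradient f (x (k j) ω) (idx j ω)))
    (ρ : ℝ) (hρ : 1 < ρ)
    (ψ : ℝ) (hψ : ψ = 1 + 2 * τ * ρ ^ τ * Lres / (Real.sqrt n * Lmax))
    (hγ1 : γ ≤ 1 / ψ)
    (hγ2 : γ ≤ (ρ - 1) * Real.sqrt n * Lmax / (2 * ρ ^ (τ + 1) * Lres))
    (hγ3 : γ ≤ (ρ - 1) * Real.sqrt n * Lmax / (Lres * ρ ^ τ * (2 + Lres / (Real.sqrt n * Lmax)))) :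
    ∀ j : ℕ,
      ρ⁻¹ * (∫ ω, ‖gradient f (x j ω)‖ ^ 2) ≤ (∫ ω, ‖gradient f (x (j+1) ω)‖ ^ 2) ∧
      (∫ ω, ‖gradient f (x (j+1) ω)‖ ^ 2) ≤ ρ * (∫ ω, ‖gradient f (x j ω)‖ ^ 2) :=
  asyscd_gradient_ratio_bounds_general hn f Lres Lmax hLres_pos hLmax_pos hLres idx hidx_meas
    hidx_unif hidx_indep τ k hk γ hγ_pos x0 x hx0 hxiter ρ hρ hγ2
end

section
/- Under the constrained AsySCD iteration, suppose n ≥ 5, let ρ > (1 − 2/√n)^{-1}, and define ψ = 1 + (L_res·τ·ρ^τ/(√n·L_max))·(2 + L_max/(√n·L_res) + 2τ/n). If γ > 0 satisfies γ ≤ 1/ψ and γ ≤ (1 − 1/ρ − 2/√n)·√n·L_max/(4L_res·τ·ρ^τ), then for every j ≥ 1, E‖x_{j−1} − x̄_j‖² ≤ ρ·E‖x_j − x̄_{j+1}‖². -/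
/-!
The minimiser `x̄_{j+1}` is the projection `P_Ω (x_j - (γ / L_max) ∇f(x_{k(j)}))`, and because `Ω`
is a box the actual iterate `x_{j+1}` is `x_j` with its coordinate `i(j)` replaced by that of
`x̄_{j+1}`. Firm nonexpansiveness of `P_Ω` gives, along every sample path,
`‖x_j - x̄_{j+1}‖ ≤ ‖x_{j+1} - x̄_{j+2}‖ + ‖x_{j+1} - x_j‖ + (γ L_res / L_max) ∑ ‖x_{l+1} - x_l‖`,
the sum running over the steps between the two delayed read positions `k(j)` and `k(j+1)`.
Expectations of quantities determined by `i(0), …, i(J-1)` are averages over the `n ^ J` index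
prefixes, so Minkowski's inequality carries this bound to the `L²` norms `r_j` of the residuals;
and since `i(l)` is uniform and independent of `x_l, x̄_{l+1}`, the `L²` norm of the step
`x_{l+1} - x_l` is `r_l / √n`. By strong induction on `j` the delayed steps are at most
`ρ^{τ/2} r_j / √n`, and the steplength condition makes the resulting contraction factor at least
`ρ^{-1/2}`.
-/

open MeasureTheory ProbabilityTheory Real ENNReal
open scoped InnerProductSpace

section MetricProjection

variable {E : Type*} [NormedAddCommGroup E] [InnerProductSpace ℝ E]

def IsMetricProj (K : Set E) (P : E → E) : Prop :=
  ∀ y, P y ∈ K ∧ ∀ z ∈ K, ⟪y - P y, z - P y⟫_ℝ ≤ 0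

theorem real_inner_le_zero_of_forall_norm_sub_le {K : Set E} (hK : Convex ℝ K) {y p : E}
    (hp : p ∈ K) (h : ∀ z ∈ K, ‖y - p‖ ≤ ‖y - z‖) : ∀ z ∈ K, ⟪y - p, z - p⟫_ℝ ≤ 0 := by
  have : Nonempty K := ⟨⟨p, hp⟩⟩
  refine (norm_eq_iInf_iff_real_inner_le_zero hK hp).1 (le_antisymm ?_ ?_)
  · exact le_ciInf fun z => h z z.2
  · exact ciInf_le ⟨0, Set.forall_mem_range.2 fun _ => norm_nonneg _⟩ (⟨p, hp⟩ : K)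

theorem norm_sub_le_of_real_inner_le_zero {K : Set E} {y p : E}
    (h : ∀ z ∈ K, ⟪y - p, z - p⟫_ℝ ≤ 0) : ∀ z ∈ K, ‖y - p‖ ≤ ‖y - z‖ := by
  intro z hz
  have hexp : ‖y - z‖ ^ 2 = ‖y - p‖ ^ 2 - 2 * ⟪y - p, z - p⟫_ℝ + ‖z - p‖ ^ 2 := by
    rw [show y - z = (y - p) - (z - p) by abel, norm_sub_sq_real]
  exact (sq_le_sq₀ (norm_nonneg _) (norm_nonneg _)).1 (by nlinarith [h z hz, sq_nonneg ‖z - p‖])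

theorem norm_sub_sq_le_real_inner_of_real_inner_le_zero {a b p q : E}
    (hp : ⟪a - p, q - p⟫_ℝ ≤ 0) (hq : ⟪b - q, p - q⟫_ℝ ≤ 0) : ‖p - q‖ ^ 2 ≤ ⟪a - b, p - q⟫_ℝ := by
  have : ⟪a - b, p - q⟫_ℝ - ‖p - q‖ ^ 2 = -⟪a - p, q - p⟫_ℝ - ⟪b - q, p - q⟫_ℝ := by
    rw [← real_inner_self_eq_norm_sq]
    simp only [inner_sub_left, inner_sub_right, real_inner_comm p q]
    ring
  linarith

theorem isMetricProj_of_forall_norm_sub_le {K : Set E} {P : E → E} (hK : Convex ℝ K)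
    (hP : ∀ y, P y ∈ K ∧ ∀ z ∈ K, ‖y - P y‖ ≤ ‖y - z‖) : IsMetricProj K P :=
  fun y => ⟨(hP y).1, real_inner_le_zero_of_forall_norm_sub_le hK (hP y).1 (hP y).2⟩

theorem forall_norm_sub_le_of_isMinOn {K : Set E} {x g p : E} {L γ : ℝ} (hL : 0 < L) (hγ : 0 < γ)
    (h : IsMinOn (fun z => ⟪g, z - x⟫_ℝ + L / (2 * γ) * ‖z - x‖ ^ 2) K p) :
    ∀ z ∈ K, ‖x - (γ / L) • g - p‖ ≤ ‖x - (γ / L) • g - z‖ := by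
  have hmodel : ∀ z, ⟪g, z - x⟫_ℝ + L / (2 * γ) * ‖z - x‖ ^ 2
      = L / (2 * γ) * ‖x - (γ / L) • g - z‖ ^ 2 - γ / (2 * L) * ‖g‖ ^ 2 := by
    intro z
    rw [show x - (γ / L) • g - z = -((z - x) + (γ / L) • g) by abel, norm_neg,
      norm_add_sq_real, real_inner_smul_right, norm_smul, real_inner_comm, Real.norm_eq_abs,
      mul_pow, sq_abs]
    field_simp
    ring
  intro z hz
  have hpz := isMinOn_iff.1 h z hz
  simp only [hmodel] at hpz
  have hc : 0 < L / (2 * γ) := by positivity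
  exact (sq_le_sq₀ (norm_nonneg _) (norm_nonneg _)).1 (le_of_mul_le_mul_left (by linarith) hc)

namespace IsMetricProj

variable {K : Set E} {P : E → E}

theorem norm_sub_sq_le_real_inner (hP : IsMetricProj K P) (a b : E) :
    ‖P a - P b‖ ^ 2 ≤ ⟪a - b, P a - P b⟫_ℝ :=
  norm_sub_sq_le_real_inner_of_real_inner_le_zero ((hP a).2 _ (hP b).1) ((hP b).2 _ (hP a).1)

theorem norm_sub_le (hP : IsMetricProj K P) (a b : E) : ‖P a - P b‖ ≤ ‖a - b‖ := by
  have h := hP.norm_sub_sq_le_real_inner a b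
  have hcs := real_inner_le_norm (a - b) (P a - P b)
  nlinarith [norm_nonneg (P a - P b), norm_nonneg (a - b)]

theorem norm_sub_sub_le (hP : IsMetricProj K P) (a b : E) :
    ‖(a - P a) - (b - P b)‖ ≤ ‖a - b‖ := by
  have h := hP.norm_sub_sq_le_real_inner a b
  have hexp : ‖(a - P a) - (b - P b)‖ ^ 2
      = ‖a - b‖ ^ 2 - 2 * ⟪a - b, P a - P b⟫_ℝ + ‖P a - P b‖ ^ 2 := by
    rw [show (a - P a) - (b - P b) = (a - b) - (P a - P b) by abel, norm_sub_sq_real]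
  exact (sq_le_sq₀ (norm_nonneg _) (norm_nonneg _)).1 (by nlinarith)

theorem eq_of_forall_norm_sub_le (hP : IsMetricProj K P) {y p : E} (hp : p ∈ K)
    (h : ∀ z ∈ K, ‖y - p‖ ≤ ‖y - z‖) : P y = p := by
  have hexp : ‖y - p‖ ^ 2 = ‖y - P y‖ ^ 2 - 2 * ⟪y - P y, p - P y⟫_ℝ + ‖p - P y‖ ^ 2 := by
    rw [show y - p = (y - P y) - (p - P y) by abel, norm_sub_sq_real]
  have hnear : ‖y - p‖ ^ 2 ≤ ‖y - P y‖ ^ 2 :=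
    pow_le_pow_left₀ (norm_nonneg _) (h _ (hP y).1) 2
  have hzero : ‖p - P y‖ ^ 2 ≤ 0 := by nlinarith [(hP y).2 p hp]
  exact (sub_eq_zero.1 (norm_eq_zero.1 (by nlinarith [norm_nonneg (p - P y)]))).symm

theorem eq_of_real_inner_le_zero (hP : IsMetricProj K P) {y p : E} (hp : p ∈ K)
    (h : ∀ z ∈ K, ⟪y - p, z - p⟫_ℝ ≤ 0) : P y = p :=
  hP.eq_of_forall_norm_sub_le hp (norm_sub_le_of_real_inner_le_zero h)

theorem norm_sub_apply_sub_smul_le (hP : IsMetricProj K P) (x₁ x₂ g₁ g₂ : E) {α : ℝ}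
    (hα : 0 ≤ α) :
    ‖x₁ - P (x₁ - α • g₁)‖ ≤ ‖x₂ - P (x₂ - α • g₂)‖ + ‖x₂ - x₁‖ + α * ‖g₁ - g₂‖ := by
  set a := x₁ - α • g₁
  set b := x₂ - α • g₁
  set b' := x₂ - α • g₂
  have hsplit : x₁ - P a = (x₂ - P b') + ((a - P a) - (b - P b)) + (P b' - P b) := by
    simp only [a, b]; abel
  have hab : ‖a - b‖ = ‖x₂ - x₁‖ := by
    rw [show a - b = -(x₂ - x₁) by simp only [a, b]; abel, norm_neg]
  have hbb : ‖b' - b‖ = α * ‖g₁ - g₂‖ := by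
    rw [show b' - b = α • (g₁ - g₂) by simp only [b, b']; rw [smul_sub]; abel, norm_smul,
      Real.norm_of_nonneg hα]
  calc ‖x₁ - P a‖ ≤ ‖x₂ - P b'‖ + ‖(a - P a) - (b - P b)‖ + ‖P b' - P b‖ := by
        rw [hsplit]; exact norm_add₃_le
    _ ≤ ‖x₂ - P b'‖ + ‖x₂ - x₁‖ + α * ‖g₁ - g₂‖ := by
        gcongr
        · exact hab ▸ hP.norm_sub_sub_le a b
        · exact hbb ▸ hP.norm_sub_le b' b

end IsMetricProj

end MetricProjection

namespace EuclideanSpace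

variable {ι : Type*}

def box (Ci : ι → Set ℝ) : Set (EuclideanSpace ℝ ι) := {z | ∀ i, z i ∈ Ci i}

theorem convex_box {Ci : ι → Set ℝ} (h : ∀ i, (Ci i).OrdConnected) : Convex ℝ (box Ci) :=
  fun _ hz _ hz' _ _ ha hb hab i => by simpa using (h i).convex (hz i) (hz' i) ha hb hab

variable [DecidableEq ι]

theorem update_mem_box {Ci : ι → Set ℝ} {p : EuclideanSpace ℝ ι} (hp : p ∈ box Ci) {i : ι}
    {t : ℝ} (ht : t ∈ Ci i) : p + single i (t - p i) ∈ box Ci := by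
  intro m
  by_cases hm : m = i
  · subst hm; simpa using ht
  · simpa [hm] using hp m

theorem real_inner_le_zero_box_iff [Fintype ι] {Ci : ι → Set ℝ} {y p : EuclideanSpace ℝ ι}
    (hp : p ∈ box Ci) :
    (∀ z ∈ box Ci, ⟪y - p, z - p⟫_ℝ ≤ 0) ↔ ∀ i, ∀ t ∈ Ci i, (y i - p i) * (t - p i) ≤ 0 := by
  constructor
  · intro h i t ht
    have := h _ (update_mem_box hp ht)
    rwa [add_sub_cancel_left, inner_single_right, mul_comm] at this
  · intro h z hz
    simp only [PiLp.inner_apply, PiLp.sub_apply, RCLike.inner_apply, conj_trivial]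
    exact Finset.sum_nonpos fun i _ => by simpa [mul_comm] using h i _ (hz i)

theorem _root_.IsMetricProj.apply_sub_single_eq [Fintype ι] {Ci : ι → Set ℝ}
    {P : EuclideanSpace ℝ ι → EuclideanSpace ℝ ι} (hP : IsMetricProj (box Ci) P)
    {x : EuclideanSpace ℝ ι} (hx : x ∈ box Ci) (g : EuclideanSpace ℝ ι) (i : ι) (α : ℝ) :
    P (x - single i (α * g i)) = x + single i ((P (x - α • g) - x) i) := by
  set q := P (x - α • g)
  have hq := (real_inner_le_zero_box_iff (hP (x - α • g)).1).1 (hP (x - α • g)).2 i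
  have hw : x + single i ((q - x) i) ∈ box Ci := update_mem_box hx ((hP _).1 i)
  refine hP.eq_of_real_inner_le_zero hw ((real_inner_le_zero_box_iff hw).2 fun m t ht => ?_)
  by_cases hm : m = i
  · subst hm
    simpa [mul_comm α] using hq t ht
  · simp [hm]

end EuclideanSpace

def delayWindow (k : ℕ → ℕ) (j : ℕ) : Finset ℕ :=
  Finset.Ico (min (k j) (k (j + 1))) (max (k j) (k (j + 1)))

section DelayWindow

variable {k : ℕ → ℕ} {τ : ℕ}

theorem le_and_le_add_of_mem_delayWindow (hk : ∀ j, k j ≤ j ∧ j ≤ k j + τ) {j l : ℕ}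
    (hl : l ∈ delayWindow k j) :
    l ≤ j ∧ j ≤ l + τ := by
  have := hk j
  have := hk (j + 1)
  simp only [delayWindow, Finset.mem_Ico] at hl
  omega

theorem card_delayWindow_le (hk : ∀ j, k j ≤ j ∧ j ≤ k j + τ) (j : ℕ) :
    (delayWindow k j).card ≤ τ + 1 := by
  have := hk j
  have := hk (j + 1)
  simp only [delayWindow, Nat.card_Ico]
  omega

end DelayWindow

theorem norm_sub_le_sum_Ico_min_max {F : Type*} [SeminormedAddCommGroup F] {v : ℕ → F}
    {d : ℕ → ℝ} (hd : ∀ l, ‖v l - v (l + 1)‖ ≤ d l) (a b : ℕ) :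
    ‖v a - v b‖ ≤ ∑ l ∈ Finset.Ico (min a b) (max a b), d l := by
  have hdist : ∀ {a b}, a ≤ b → ‖v a - v b‖ ≤ ∑ l ∈ Finset.Ico a b, d l := fun hab => by
    simpa only [dist_eq_norm] using
      dist_le_Ico_sum_of_dist_le (f := v) (d := d) hab fun _ _ => by rw [dist_eq_norm]; exact hd _
  rcases le_total a b with h | h
  · simpa [min_eq_left h, max_eq_right h] using hdist h
  · simpa [min_eq_right h, max_eq_left h, norm_sub_rev] using hdist h

theorem IsMetricProj.norm_sub_apply_le_of_delayed {E : Type*} [NormedAddCommGroup E]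
    [InnerProductSpace ℝ E] {K : Set E} {P : E → E} (hP : IsMetricProj K P) {G : E → E} {L α : ℝ}
    (hα : 0 ≤ α) {x : ℕ → E} (k : ℕ → ℕ)
    (hG : ∀ l, ‖G (x l) - G (x (l + 1))‖ ≤ L * ‖x (l + 1) - x l‖) (j : ℕ) :
    ‖x j - P (x j - α • G (x (k j)))‖ ≤ ‖x (j + 1) - P (x (j + 1) - α • G (x (k (j + 1))))‖
      + ‖x (j + 1) - x j‖ + α * L * ∑ l ∈ delayWindow k j, ‖x (l + 1) - x l‖ := by
  calc _ ≤ _ + _ + α * ‖G (x (k j)) - G (x (k (j + 1)))‖ :=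
        hP.norm_sub_apply_sub_smul_le _ _ _ _ hα
    _ ≤ _ := by
        rw [mul_assoc, Finset.mul_sum]
        gcongr
        exact norm_sub_le_sum_Ico_min_max (v := fun l => G (x l)) hG _ _

theorem le_pow_mul_of_forall_le_mul {r : ℕ → ℝ} {σ : ℝ} (hσ : 0 ≤ σ) {l j : ℕ} (hlj : l ≤ j)
    (h : ∀ m, l ≤ m → m < j → r m ≤ σ * r (m + 1)) : r l ≤ σ ^ (j - l) * r j := by
  induction j, hlj using Nat.le_induction with
  | base => simp
  | succ j hlj ih =>
    calc r l ≤ σ ^ (j - l) * r j := ih fun m hlm hmj => h m hlm (by omega)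
      _ ≤ σ ^ (j - l) * (σ * r (j + 1)) := by gcongr; exact h j hlj (by omega)
      _ = σ ^ (j + 1 - l) * r (j + 1) := by rw [Nat.sub_add_comm hlj, pow_succ]; ring

theorem le_mul_succ_of_delayed_recursion {r s : ℕ → ℝ} {σ θ c : ℝ} {τ : ℕ}
    {W : ℕ → Finset ℕ} (hr : ∀ j, 0 ≤ r j) (hσ0 : 0 ≤ σ) (hθ : 0 ≤ θ) (hc : 0 ≤ c)
    (hW : ∀ j, ∀ l ∈ W j, l ≤ j ∧ j ≤ l + τ) (hWcard : ∀ j, (W j).card ≤ τ + 1)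
    (hs : ∀ l, s l = θ * r l) (hrec : ∀ j, r j ≤ r (j + 1) + s j + c * ∑ l ∈ W j, s l)
    (hcoef : 1 ≤ σ * (1 - θ - c * θ * (τ + 1) * σ ^ τ)) (j : ℕ) : r j ≤ σ * r (j + 1) := by
  have hσ : 1 ≤ σ := by
    by_contra! hσ1
    have : 0 ≤ c * θ * (τ + 1) * σ ^ τ := by positivity
    nlinarith
  induction j using Nat.strong_induction_on with
  | _ j ih =>
  have hwin : ∀ l ∈ W j, s l ≤ θ * σ ^ τ * r j := fun l hl => by
    obtain ⟨hlj, hjl⟩ := hW j l hl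
    have hchain := le_pow_mul_of_forall_le_mul (by linarith) hlj fun m _ hm => ih m hm
    have hpow : σ ^ (j - l) ≤ σ ^ τ := pow_le_pow_right₀ hσ (by omega)
    have := hr j
    calc s l = θ * r l := hs l
      _ ≤ θ * (σ ^ (j - l) * r j) := by gcongr
      _ ≤ θ * (σ ^ τ * r j) := by gcongr
      _ = θ * σ ^ τ * r j := by ring
  have hsum : ∑ l ∈ W j, s l ≤ (τ + 1) * (θ * σ ^ τ * r j) := by
    refine (Finset.sum_le_card_nsmul _ _ _ hwin).trans ?_
    rw [nsmul_eq_mul]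
    gcongr
    · have := hr j; positivity
    · exact_mod_cast hWcard j
  have hstep : (1 - θ - c * θ * (τ + 1) * σ ^ τ) * r j ≤ r (j + 1) := by
    have := hrec j
    rw [hs j] at this
    nlinarith [mul_le_mul_of_nonneg_left hsum hc]
  calc r j ≤ σ * (1 - θ - c * θ * (τ + 1) * σ ^ τ) * r j := le_mul_of_one_le_left (hr j) hcoef
    _ = σ * ((1 - θ - c * θ * (τ + 1) * σ ^ τ) * r j) := by ring
    _ ≤ σ * r (j + 1) := by gcongr

theorem one_le_mul_one_sub_half_sub {σ b : ℝ} (hσ : 1 < σ) (hb : b * σ ^ 2 < σ ^ 2 - 1) :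
    1 ≤ σ * (1 - b / 2) - (1 - 1 / σ ^ 2 - b) / 2 := by
  have key : σ * (1 - b / 2) - (1 - 1 / σ ^ 2 - b) / 2 - 1
      = (σ - 1) * ((σ - 1) * (2 * σ + 1) - b * σ ^ 2) / (2 * σ ^ 2) := by
    field_simp
    ring
  have : 0 ≤ (σ - 1) * ((σ - 1) * (2 * σ + 1) - b * σ ^ 2) / (2 * σ ^ 2) := by
    apply div_nonneg _ (by positivity)
    apply mul_nonneg (by linarith)
    nlinarith
  linarith

theorem one_le_sqrt_mul_of_le_div {s ρ c : ℝ} {τ : ℕ} (hs : 2 < s) (hρ : (1 - 2 / s)⁻¹ < ρ)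
    (hτ : 1 ≤ τ) (hcρ : c ≤ (1 - 1 / ρ - 2 / s) * s / (4 * τ * ρ ^ τ)) :
    1 ≤ √ρ * (1 - 1 / s - c * (1 / s) * (τ + 1) * √ρ ^ τ) := by
  set σ := √ρ
  set b := 2 / s
  have hb1 : b < 1 := (div_lt_one (by linarith)).2 hs
  have hbρ : 1 < ρ * (1 - b) := (inv_lt_iff_one_lt_mul₀ (by linarith)).1 hρ
  have hρ1 : 1 < ρ := by nlinarith [show (0 : ℝ) < b by positivity]
  have hσ2 : σ ^ 2 = ρ := Real.sq_sqrt (by linarith)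
  have hσ1 : 1 < σ := by nlinarith [Real.sqrt_nonneg ρ]
  have hτσ : σ ≤ σ ^ τ := le_self_pow₀ hσ1.le (by omega)
  have hρτ : ρ ^ τ = σ ^ τ * σ ^ τ := by rw [← hσ2, ← pow_mul, ← pow_add]; ring_nf
  set X := 1 - 1 / ρ - b
  have hX : 0 < X := by
    have : 1 / ρ < 1 - b := by rw [div_lt_iff₀ (by linarith)]; linarith
    simp only [X]; linarith
  have hτ' : (1 : ℝ) ≤ τ := by exact_mod_cast hτ
  have hdelay : σ * (c * (1 / s) * (τ + 1) * σ ^ τ) ≤ X / 2 := by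
    calc σ * (c * (1 / s) * (τ + 1) * σ ^ τ)
        ≤ σ * (X * s / (4 * τ * ρ ^ τ) * (1 / s) * (τ + 1) * σ ^ τ) := by gcongr
      _ = X * (σ * (τ + 1)) / (4 * τ * σ ^ τ) := by
          rw [hρτ]; field_simp
      _ ≤ X * (2 * τ * σ ^ τ) / (4 * τ * σ ^ τ) := by gcongr X * ?_ / _; nlinarith
      _ = X / 2 := by field_simp; ring
  have hfinal : 1 ≤ σ * (1 - b / 2) - X / 2 := by
    have hX' : X = 1 - 1 / σ ^ 2 - b := by rw [hσ2]
    exact hX' ▸ one_le_mul_one_sub_half_sub hσ1 (by rw [hσ2]; linarith)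
  have hbs : 1 / s = b / 2 := by simp only [b]; ring
  rw [hbs] at hdelay ⊢
  nlinarith

theorem one_le_sqrt_mul_of_steplength_le {n τ : ℕ} {ρ γ Lres Lmax : ℝ} (hn : 5 ≤ n)
    (hρ : (1 - 2 / √n)⁻¹ < ρ) (hγ : 0 < γ) (hLres : 0 < Lres) (hLmax : 0 < Lmax)
    (hγρ : γ ≤ (1 - 1 / ρ - 2 / √n) * √n * Lmax / (4 * Lres * τ * ρ ^ τ)) :
    1 ≤ √ρ * (1 - 1 / √n - γ / Lmax * Lres * (1 / √n) * (τ + 1) * √ρ ^ τ) := by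
  -- for `τ = 0` the bound on `γ` divides by zero and reads `γ ≤ 0`
  have hτ : 1 ≤ τ := Nat.one_le_iff_ne_zero.2 fun hτ0 => by
    linarith [show γ ≤ 0 by simpa [hτ0] using hγρ]
  have hn' : (2 : ℝ) ^ 2 < n := by
    have : (5 : ℝ) ≤ n := by exact_mod_cast hn
    linarith
  refine one_le_sqrt_mul_of_le_div ((Real.lt_sqrt (by norm_num)).2 hn') hρ hτ ?_
  calc γ / Lmax * Lres
      ≤ (1 - 1 / ρ - 2 / √n) * √n * Lmax / (4 * Lres * τ * ρ ^ τ) / Lmax * Lres := by gcongr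
    _ = (1 - 1 / ρ - 2 / √n) * √n / (4 * τ * ρ ^ τ) := by field_simp

theorem Fintype.card_smul_sum_apply_self {ι κ M : Type*} [Fintype ι] [DecidableEq ι] [Fintype κ]
    [AddCommMonoid M] (i₀ : ι) (F : (ι → κ) → κ → M)
    (hF : ∀ a v, F (Function.update a i₀ v) = F a) :
    Fintype.card κ • ∑ a, F a (a i₀) = ∑ a, ∑ v, F a v := by
  have hinv : Function.Involutive fun p : (ι → κ) × κ => (Function.update p.1 i₀ p.2, p.1 i₀) :=
    fun p => by simp
  calc Fintype.card κ • ∑ a, F a (a i₀) = ∑ p : (ι → κ) × κ, F p.1 (p.1 i₀) := by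
        simp [Fintype.sum_prod_type, Finset.smul_sum]
    _ = ∑ p : (ι → κ) × κ, F p.1 p.2 :=
        Fintype.sum_equiv (hinv.toPerm _) _ _ fun p => by simp [hF]
    _ = ∑ a, ∑ v, F a v := Fintype.sum_prod_type _

theorem EuclideanSpace.norm_le_norm_of_abs_le {ι : Type*} [Fintype ι] {u v : EuclideanSpace ℝ ι}
    (h : ∀ i, |u i| ≤ v i) : ‖u‖ ≤ ‖v‖ := by
  rw [EuclideanSpace.norm_eq, EuclideanSpace.norm_eq]
  gcongr with i
  exact (h i).trans (le_abs_self _)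

def DependsOnFirst {Ω κ α : Type*} (idx : ℕ → Ω → κ) (l : ℕ) (F : Ω → α) : Prop :=
  ∀ ω ω', (∀ m < l, idx m ω = idx m ω') → F ω = F ω'

namespace DependsOnFirst

variable {Ω κ α β γ : Type*} {idx : ℕ → Ω → κ} {l : ℕ} {F : Ω → α}

theorem mono (hF : DependsOnFirst idx l F) {J : ℕ} (hJ : l ≤ J) : DependsOnFirst idx J F :=
  fun ω ω' h => hF ω ω' fun m hm => h m (by omega)

theorem comp (hF : DependsOnFirst idx l F) (g : α → β) : DependsOnFirst idx l fun ω => g (F ω) :=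
  fun ω ω' h => congrArg g (hF ω ω' h)

theorem comp₂ {G : Ω → β} (hF : DependsOnFirst idx l F) (hG : DependsOnFirst idx l G)
    (g : α → β → γ) : DependsOnFirst idx l fun ω => g (F ω) (G ω) :=
  fun ω ω' h => by simp only [hF ω ω' h, hG ω ω' h]

theorem of_delayed_recursion {x : ℕ → Ω → α} {k : ℕ → ℕ} (hk : ∀ j, k j ≤ j)
    (step : ℕ → α → α → κ → α) (h0 : ∀ ω ω', x 0 ω = x 0 ω')
    (hx : ∀ j ω, x (j + 1) ω = step j (x j ω) (x (k j) ω) (idx j ω)) (l : ℕ) :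
    DependsOnFirst idx l (x l) := by
  induction l using Nat.strong_induction_on with
  | _ l ih =>
  intro ω ω' h
  cases l with
  | zero => exact h0 ω ω'
  | succ j =>
    have hkj := hk j
    rw [hx, hx, ih j (by omega) ω ω' fun m hm => h m (by omega),
      ih (k j) (by omega) ω ω' fun m hm => h m (by omega), h j (by omega)]

end DependsOnFirst

section IndexPrefix

variable {Ω κ : Type*} [MeasureSpace Ω] [MeasurableSpace κ] [MeasurableSingletonClass κ]
  {idx : ℕ → Ω → κ} {q : ℝ≥0∞}

theorem measure_forall_idx_eq (hunif : ∀ j i, ℙ {ω | idx j ω = i} = q)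
    (hindep : iIndepFun idx ℙ) {J : ℕ} (a : Fin J → κ) :
    ℙ {ω | ∀ m : Fin J, idx m ω = a m} = q ^ J := by
  have hset : {ω | ∀ m : Fin J, idx m ω = a m} = ⋂ m : Fin J, idx m ⁻¹' {a m} := by
    ext; simp
  rw [hset, (hindep.precomp Fin.val_injective).meas_iInter
    fun m => ⟨{a m}, measurableSet_singleton _, rfl⟩]
  simp [Set.preimage, hunif]

theorem exists_integral_eq_sum_of_dependsOnFirst [Fintype κ] [IsFiniteMeasure (ℙ : Measure Ω)]
    (hmeas : ∀ j, Measurable (idx j)) (hunif : ∀ j i, ℙ {ω | idx j ω = i} = q) (hq : q ≠ 0)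
    (hindep : iIndepFun idx ℙ) (J : ℕ) :
    ∃ w : (Fin J → κ) → Ω, (∀ a (m : Fin J), idx m (w a) = a m) ∧
      ∀ F : Ω → ℝ, DependsOnFirst idx J F → ∫ ω, F ω = q.toReal ^ J * ∑ a, F (w a) := by
  set T : Ω → (Fin J → κ) := fun ω m => idx m ω
  have hT : Measurable T := measurable_pi_lambda _ fun m => hmeas m
  have hatom : ∀ a, ℙ (T ⁻¹' {a}) = q ^ J := fun a => by
    simpa [T, Set.preimage, funext_iff] using measure_forall_idx_eq hunif hindep a
  have hsurj : T.Surjective := fun a =>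
    nonempty_of_measure_ne_zero (s := T ⁻¹' {a}) (by rw [hatom]; exact pow_ne_zero _ hq)
  refine ⟨Function.surjInv hsurj, fun a m => congrFun (Function.surjInv_eq hsurj a) m,
    fun F hF => ?_⟩
  have hFT : ∀ ω, F ω = F (Function.surjInv hsurj (T ω)) := fun ω =>
    hF _ _ fun m hm => (congrFun (Function.surjInv_eq hsurj (T ω)) ⟨m, hm⟩).symm
  calc ∫ ω, F ω = ∫ a, F (Function.surjInv hsurj a) ∂(Measure.map T ℙ) := by
        rw [integral_map hT.aemeasurable (Measurable.of_discrete).aestronglyMeasurable]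
        exact integral_congr_ae (Filter.Eventually.of_forall hFT)
    _ = q.toReal ^ J * ∑ a, F (Function.surjInv hsurj a) := by
        rw [integral_fintype Integrable.of_finite, Finset.mul_sum]
        refine Finset.sum_congr rfl fun a _ => ?_
        rw [measureReal_def, Measure.map_apply hT (measurableSet_singleton a), hatom,
          ENNReal.toReal_pow, smul_eq_mul]

theorem card_mul_integral_apply_idx_sq [Fintype κ] [DecidableEq κ]
    [IsFiniteMeasure (ℙ : Measure Ω)]
    (hmeas : ∀ j, Measurable (idx j)) (hunif : ∀ j i, ℙ {ω | idx j ω = i} = q) (hq : q ≠ 0)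
    (hindep : iIndepFun idx ℙ) {l : ℕ} {D : Ω → EuclideanSpace ℝ κ}
    (hD : DependsOnFirst idx l D) :
    Fintype.card κ * ∫ ω, D ω (idx l ω) ^ 2 = ∫ ω, ‖D ω‖ ^ 2 := by
  obtain ⟨w, hw, hint⟩ := exists_integral_eq_sum_of_dependsOnFirst hmeas hunif hq hindep (l + 1)
  have hDw : ∀ a v, D (w (Function.update a (Fin.last l) v)) = D (w a) := fun a v =>
    hD _ _ fun m hm => by
      rw [hw _ ⟨m, by omega⟩, hw _ ⟨m, by omega⟩]
      exact Function.update_of_ne (Fin.ne_of_lt hm) _ _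
  have hcoord : DependsOnFirst idx (l + 1) fun ω => D ω (idx l ω) ^ 2 := fun ω ω' h => by
    dsimp only
    rw [hD ω ω' fun m hm => h m (by omega), h l (by omega)]
  rw [hint _ hcoord, hint _ ((hD.mono l.le_succ).comp (‖·‖ ^ 2))]
  have hreg := Fintype.card_smul_sum_apply_self (Fin.last l) (fun a v => D (w a) v ^ 2)
    fun a v => by simp only [hDw]
  simp only [nsmul_eq_mul] at hreg
  have hlast : ∀ a, idx l (w a) = a (Fin.last l) := fun a => hw a (Fin.last l)
  simp only [hlast, EuclideanSpace.norm_sq_eq, Real.norm_eq_abs, sq_abs]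
  rw [← hreg]
  ring

theorem sqrt_integral_sq_le_of_abs_le [Fintype κ] [IsFiniteMeasure (ℙ : Measure Ω)]
    (hmeas : ∀ j, Measurable (idx j)) (hunif : ∀ j i, ℙ {ω | idx j ω = i} = q) (hq : q ≠ 0)
    (hindep : iIndepFun idx ℙ) {J : ℕ} {ι : Type*} {s : Finset ι} {F G H : Ω → ℝ}
    {K : ι → Ω → ℝ} {c : ℝ} (hc : 0 ≤ c) (hF : DependsOnFirst idx J F)
    (hG : DependsOnFirst idx J G) (hH : DependsOnFirst idx J H)
    (hK : ∀ i ∈ s, DependsOnFirst idx J (K i))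
    (h : ∀ ω, |F ω| ≤ G ω + H ω + c * ∑ i ∈ s, K i ω) :
    √(∫ ω, F ω ^ 2) ≤ √(∫ ω, G ω ^ 2) + √(∫ ω, H ω ^ 2) + c * ∑ i ∈ s, √(∫ ω, K i ω ^ 2) := by
  obtain ⟨w, -, hint⟩ := exists_integral_eq_sum_of_dependsOnFirst hmeas hunif hq hindep J
  let v : (Ω → ℝ) → EuclideanSpace ℝ (Fin J → κ) := fun F => WithLp.toLp 2 fun a => F (w a)
  have hnorm : ∀ F, DependsOnFirst idx J F → √(∫ ω, F ω ^ 2) = √(q.toReal ^ J) * ‖v F‖ := by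
    intro F hF
    rw [hint _ (hF.comp (· ^ 2)), Real.sqrt_mul (by positivity), EuclideanSpace.norm_eq]
    simp [v, Real.norm_eq_abs, sq_abs]
  have hmono : ‖v F‖ ≤ ‖v G + v H + c • ∑ i ∈ s, v (K i)‖ :=
    EuclideanSpace.norm_le_norm_of_abs_le fun a => by simpa [v] using h (w a)
  have hsplit : ‖v G + v H + c • ∑ i ∈ s, v (K i)‖ ≤ ‖v G‖ + ‖v H‖ + c * ∑ i ∈ s, ‖v (K i)‖ := by
    refine norm_add₃_le.trans ?_
    rw [norm_smul, Real.norm_of_nonneg hc]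
    gcongr
    exact norm_sum_le _ _
  rw [hnorm F hF, hnorm G hG, hnorm H hH, Finset.sum_congr rfl fun i hi => hnorm (K i) (hK i hi),
    ← Finset.mul_sum]
  calc √(q.toReal ^ J) * ‖v F‖
      ≤ √(q.toReal ^ J) * (‖v G‖ + ‖v H‖ + c * ∑ i ∈ s, ‖v (K i)‖) := by
        gcongr; exact hmono.trans hsplit
    _ = _ := by ring

end IndexPrefix

theorem integral_norm_sub_sq_le_of_pathwise {Ω κ : Type*} [MeasureSpace Ω]
    [IsFiniteMeasure (ℙ : Measure Ω)] [Fintype κ] [DecidableEq κ] [MeasurableSpace κ]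
    [MeasurableSingletonClass κ] [Nonempty κ] {idx : ℕ → Ω → κ} {q : ℝ≥0∞}
    (hmeas : ∀ j, Measurable (idx j)) (hunif : ∀ j i, ℙ {ω | idx j ω = i} = q) (hq : q ≠ 0)
    (hindep : iIndepFun idx ℙ) {x y : ℕ → Ω → EuclideanSpace ℝ κ}
    (hx : ∀ l, DependsOnFirst idx l (x l)) (hy : ∀ l, DependsOnFirst idx l (y l))
    (hstep : ∀ l ω,
      x (l + 1) ω = x l ω + EuclideanSpace.single (idx l ω) ((y l ω - x l ω) (idx l ω)))
    {τ : ℕ} {W : ℕ → Finset ℕ} (hW : ∀ j, ∀ l ∈ W j, l ≤ j ∧ j ≤ l + τ)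
    (hWcard : ∀ j, (W j).card ≤ τ + 1) {c ρ : ℝ} (hc : 0 ≤ c)
    (hpath : ∀ j ω, ‖x j ω - y j ω‖ ≤ ‖x (j + 1) ω - y (j + 1) ω‖ + ‖x (j + 1) ω - x j ω‖
      + c * ∑ l ∈ W j, ‖x (l + 1) ω - x l ω‖)
    (hcoef : 1 ≤ √ρ * (1 - 1 / √(Fintype.card κ)
      - c * (1 / √(Fintype.card κ)) * (τ + 1) * √ρ ^ τ)) (j : ℕ) :
    ∫ ω, ‖x j ω - y j ω‖ ^ 2 ≤ ρ * ∫ ω, ‖x (j + 1) ω - y (j + 1) ω‖ ^ 2 := by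
  set r : ℕ → ℝ := fun j => √(∫ ω, ‖x j ω - y j ω‖ ^ 2)
  set s : ℕ → ℝ := fun l => √(∫ ω, ‖x (l + 1) ω - x l ω‖ ^ 2)
  have hdiff : ∀ l, DependsOnFirst idx (l + 1) fun ω => ‖x (l + 1) ω - x l ω‖ := fun l =>
    (hx (l + 1)).comp₂ ((hx l).mono l.le_succ) fun a b => ‖a - b‖
  have hres : ∀ j J, j ≤ J → DependsOnFirst idx J fun ω => ‖x j ω - y j ω‖ := fun j J h =>
    ((hx j).comp₂ (hy j) fun a b => ‖a - b‖).mono h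
  have hs : ∀ l, s l = 1 / √(Fintype.card κ) * r l := fun l => by
    have hcard := card_mul_integral_apply_idx_sq hmeas hunif hq hindep
      ((hy l).comp₂ (hx l) fun a b => a - b)
    have hnorm : ∀ ω, ‖x (l + 1) ω - x l ω‖ ^ 2 = (y l ω - x l ω) (idx l ω) ^ 2 := fun ω => by
      rw [hstep, add_sub_cancel_left, PiLp.norm_single, Real.norm_eq_abs, sq_abs]
    simp only [s, r, hnorm, norm_sub_rev (x l _)]
    rw [← hcard, Real.sqrt_mul (Nat.cast_nonneg _)]
    field_simp [show (0 : ℝ) < √(Fintype.card κ) from Real.sqrt_pos.2 (by simp [Fintype.card_pos])]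
  have hrec : ∀ j, r j ≤ r (j + 1) + s j + c * ∑ l ∈ W j, s l := fun j =>
    sqrt_integral_sq_le_of_abs_le hmeas hunif hq hindep hc (hres j (j + 1) j.le_succ)
      (hres (j + 1) (j + 1) le_rfl) (hdiff j)
      (fun l hl => (hdiff l).mono (by have := hW j l hl; omega))
      fun ω => (abs_of_nonneg (norm_nonneg _)).trans_le (hpath j ω)
  have hr := le_mul_succ_of_delayed_recursion (fun j => Real.sqrt_nonneg _) (Real.sqrt_nonneg ρ)
    (by positivity) hc hW hWcard hs hrec hcoef j
  have hρ : 0 ≤ ρ := by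
    by_contra! hρ
    rw [Real.sqrt_eq_zero_of_nonpos hρ.le] at hcoef
    linarith
  have hsq : ∀ j, ∫ ω, ‖x j ω - y j ω‖ ^ 2 = r j ^ 2 := fun j =>
    (Real.sq_sqrt (integral_nonneg fun ω => sq_nonneg _)).symm
  rw [hsq, hsq, ← Real.sq_sqrt hρ, ← mul_pow]
  exact pow_le_pow_left₀ (Real.sqrt_nonneg _) hr 2

theorem asyscd_constrained_ratio_bound_general
    {n : ℕ} (hn : 5 ≤ n)
    (f : EuclideanSpace ℝ (Fin n) → ℝ)
    (C : Set (EuclideanSpace ℝ (Fin n)))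
    (Ci : Fin n → Set ℝ)
    (hCi : ∀ i, (Ci i).Nonempty ∧ IsClosed (Ci i) ∧ (Ci i).OrdConnected)
    (hC : C = {z | ∀ i, z i ∈ Ci i})
    (PC : EuclideanSpace ℝ (Fin n) → EuclideanSpace ℝ (Fin n))
    (hPC : ∀ z, PC z ∈ C ∧ ∀ y ∈ C, ‖z - PC z‖ ≤ ‖z - y‖)
    (Lres Lmax : ℝ) (hLres_pos : 0 < Lres) (hLmax_pos : 0 < Lmax)
    (hLres : ∀ (z : EuclideanSpace ℝ (Fin n)) (i : Fin n) (t : ℝ),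
      z ∈ C → z + EuclideanSpace.single i t ∈ C →
      ‖gradient f z - gradient f (z + EuclideanSpace.single i t)‖ ≤ Lres * |t|)
    {Ω : Type} [MeasureSpace Ω] [IsProbabilityMeasure (ℙ : Measure Ω)]
    (idx : ℕ → Ω → Fin n) (hidx_meas : ∀ j, Measurable (idx j))
    (hidx_unif : ∀ j i, ℙ {ω | idx j ω = i} = (n : ℝ≥0∞)⁻¹)
    (hidx_indep : iIndepFun idx ℙ)
    (τ : ℕ) (k : ℕ → ℕ) (hk : ∀ j, k j ≤ j ∧ j ≤ k j + τ)
    (γ : ℝ)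
    (x0 : EuclideanSpace ℝ (Fin n)) (hx0C : x0 ∈ C)
    (x : ℕ → Ω → EuclideanSpace ℝ (Fin n))
    (hx0 : ∀ ω, x 0 ω = x0)
    (hxiter : ∀ j ω, x (j+1) ω =
      PC (x j ω - EuclideanSpace.single (idx j ω) (γ / Lmax * gradient f (x (k j) ω) (idx j ω))))
    (ρ : ℝ) (hρ : (1 - 2 / Real.sqrt n)⁻¹ < ρ)
    (hγ_pos : 0 < γ)
    (hγ2 : γ ≤ (1 - 1 / ρ - 2 / Real.sqrt n) * Real.sqrt n * Lmax / (4 * Lres * τ * ρ ^ τ))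
    (xbar : ℕ → Ω → EuclideanSpace ℝ (Fin n))
    (hxbar : ∀ j ω, xbar (j+1) ω ∈ C ∧
      IsMinOn (fun z => (inner ℝ (gradient f (x (k j) ω)) (z - x j ω) : ℝ) +
        Lmax / (2 * γ) * ‖z - x j ω‖ ^ 2) C (xbar (j+1) ω)) :
    ∀ j : ℕ, 1 ≤ j →
      (∫ ω, ‖x (j-1) ω - xbar j ω‖ ^ 2) ≤ ρ * ∫ ω, ‖x j ω - xbar (j+1) ω‖ ^ 2 := by
  subst hC
  have hP : IsMetricProj _ PC :=
    isMetricProj_of_forall_norm_sub_le (EuclideanSpace.convex_box fun i => (hCi i).2.2) hPC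
  have hxC : ∀ l ω, x l ω ∈ EuclideanSpace.box Ci := fun l ω => by
    cases l with
    | zero => exact hx0 ω ▸ hx0C
    | succ l => exact hxiter l ω ▸ (hP _).1
  have hxbar_eq : ∀ l ω, xbar (l + 1) ω = PC (x l ω - (γ / Lmax) • gradient f (x (k l) ω)) :=
    fun l ω => (hP.eq_of_forall_norm_sub_le (hxbar l ω).1
      (forall_norm_sub_le_of_isMinOn hLmax_pos hγ_pos (hxbar l ω).2)).symm
  have hstep : ∀ l ω, x (l + 1) ω = x l ω
      + EuclideanSpace.single (idx l ω) ((xbar (l + 1) ω - x l ω) (idx l ω)) := fun l ω => by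
    rw [hxiter, hxbar_eq]
    exact hP.apply_sub_single_eq (hxC l ω) _ _ _
  have hgrad : ∀ ω l, ‖gradient f (x l ω) - gradient f (x (l + 1) ω)‖
      ≤ Lres * ‖x (l + 1) ω - x l ω‖ := fun ω l => by
    rw [hstep, add_sub_cancel_left, PiLp.norm_single, Real.norm_eq_abs]
    exact hLres _ _ _ (hxC l ω) (hstep l ω ▸ hxC (l + 1) ω)
  have hx : ∀ l, DependsOnFirst idx l (x l) :=
    DependsOnFirst.of_delayed_recursion (fun j => (hk j).1)
      (fun _ a b i => PC (a - EuclideanSpace.single i (γ / Lmax * gradient f b i)))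
      (fun ω ω' => by rw [hx0, hx0]) hxiter
  have hxbar_dep : ∀ l, DependsOnFirst idx l (xbar (l + 1)) := fun l ω ω' h => by
    rw [hxbar_eq, hxbar_eq, hx l ω ω' h, hx (k l) ω ω' fun m hm => h m (by have := hk l; omega)]
  have : Nonempty (Fin n) := ⟨⟨0, by omega⟩⟩
  intro j hj
  obtain ⟨j, rfl⟩ := Nat.exists_eq_add_of_le' hj
  exact integral_norm_sub_sq_le_of_pathwise (c := γ / Lmax * Lres) hidx_meas hidx_unif (by simp)
    hidx_indep hx hxbar_dep hstep (fun j l => le_and_le_add_of_mem_delayWindow hk)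
    (card_delayWindow_le hk) (by positivity)
    (fun j ω => by
      simpa only [hxbar_eq] using hP.norm_sub_apply_le_of_delayed (by positivity) k (hgrad ω) j)
    (by simpa using one_le_sqrt_mul_of_steplength_le hn hρ hγ_pos hLres_pos hLmax_pos hγ2) j

theorem asyscd_constrained_ratio_bound
    {n : ℕ} (hn : 5 ≤ n)
    (f : EuclideanSpace ℝ (Fin n) → ℝ)
    (hf_smooth : ContDiff ℝ 1 f)
    (C : Set (EuclideanSpace ℝ (Fin n)))
    (Ci : Fin n → Set ℝ)
    (hCi : ∀ i, (Ci i).Nonempty ∧ IsClosed (Ci i) ∧ (Ci i).OrdConnected)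
    (hC : C = {z | ∀ i, z i ∈ Ci i})
    (hf_conv : ConvexOn ℝ C f)
    (S : Set (EuclideanSpace ℝ (Fin n)))
    (hS : S = {z | z ∈ C ∧ ∀ y ∈ C, f z ≤ f y}) (hS_ne : S.Nonempty)
    (fstar : ℝ) (hfstar : ∀ z ∈ S, f z = fstar)
    (PS : EuclideanSpace ℝ (Fin n) → EuclideanSpace ℝ (Fin n))
    (hPS : ∀ z, PS z ∈ S ∧ ∀ y ∈ S, ‖z - PS z‖ ≤ ‖z - y‖)
    (PC : EuclideanSpace ℝ (Fin n) → EuclideanSpace ℝ (Fin n))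
    (hPC : ∀ z, PC z ∈ C ∧ ∀ y ∈ C, ‖z - PC z‖ ≤ ‖z - y‖)
    (Lres Lmax : ℝ) (hLres_pos : 0 < Lres) (hLmax_pos : 0 < Lmax)
    (hLres : ∀ (z : EuclideanSpace ℝ (Fin n)) (i : Fin n) (t : ℝ),
      z ∈ C → z + EuclideanSpace.single i t ∈ C →
      ‖gradient f z - gradient f (z + EuclideanSpace.single i t)‖ ≤ Lres * |t|)
    (Li : Fin n → ℝ)
    (hLi : ∀ (z : EuclideanSpace ℝ (Fin n)) (i : Fin n) (t : ℝ),
      z ∈ C → z + EuclideanSpace.single i t ∈ C →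
      |gradient f z i - gradient f (z + EuclideanSpace.single i t) i| ≤ Li i * |t|)
    (hLmax : IsGreatest (Set.range Li) Lmax)
    {Ω : Type} [MeasureSpace Ω] [IsProbabilityMeasure (ℙ : Measure Ω)]
    (idx : ℕ → Ω → Fin n) (hidx_meas : ∀ j, Measurable (idx j))
    (hidx_unif : ∀ j i, ℙ {ω | idx j ω = i} = (n : ℝ≥0∞)⁻¹)
    (hidx_indep : iIndepFun idx ℙ)
    (τ : ℕ) (k : ℕ → ℕ) (hk : ∀ j, k j ≤ j ∧ j ≤ k j + τ)
    (γ : ℝ)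
    (x0 : EuclideanSpace ℝ (Fin n)) (hx0C : x0 ∈ C)
    (x : ℕ → Ω → EuclideanSpace ℝ (Fin n))
    (hx0 : ∀ ω, x 0 ω = x0)
    (hxiter : ∀ j ω, x (j+1) ω =
      PC (x j ω - EuclideanSpace.single (idx j ω) (γ / Lmax * gradient f (x (k j) ω) (idx j ω))))
    (R0 : ℝ) (hR0 : R0 = ‖x0 - PS x0‖)
    (ρ : ℝ) (hρ : (1 - 2 / Real.sqrt n)⁻¹ < ρ)
    (ψ : ℝ) (hψ : ψ = 1 + Lres * τ * ρ ^ τ / (Real.sqrt n * Lmax) *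
      (2 + Lmax / (Real.sqrt n * Lres) + 2 * τ / n))
    (hγ_pos : 0 < γ)
    (hγ1 : γ ≤ 1 / ψ)
    (hγ2 : γ ≤ (1 - 1 / ρ - 2 / Real.sqrt n) * Real.sqrt n * Lmax / (4 * Lres * τ * ρ ^ τ))
    (xbar : ℕ → Ω → EuclideanSpace ℝ (Fin n))
    (hxbar : ∀ j ω, xbar (j+1) ω ∈ C ∧
      IsMinOn (fun z => (inner ℝ (gradient f (x (k j) ω)) (z - x j ω) : ℝ) +
        Lmax / (2 * γ) * ‖z - x j ω‖ ^ 2) C (xbar (j+1) ω)) :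
    ∀ j : ℕ, 1 ≤ j →
      (∫ ω, ‖x (j-1) ω - xbar j ω‖ ^ 2) ≤ ρ * ∫ ω, ‖x j ω - xbar (j+1) ω‖ ^ 2 :=
  asyscd_constrained_ratio_bound_general hn f C Ci hCi hC PC hPC Lres Lmax hLres_pos hLmax_pos hLres
    idx hidx_meas hidx_unif hidx_indep τ k hk γ x0 hx0C x hx0 hxiter ρ hρ hγ_pos hγ2 xbar hxbar
end

section
/- Let f : ℝ^n → ℝ be a convex continuously differentiable function whose set S of minimizers is nonempty, with optimal value f*, and suppose f is essentially strongly convex with parameter l > 0, i.e., f(x) − f(y) ≥ ⟨∇f(y), x − y⟩ + (l/2)‖x − y‖² for all x, y with P_S(x) = P_S(y). Then for every x ∈ ℝ^n, ‖∇f(x)‖² ≥ 2l·(f(x) − f*). -/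
/-! Write `d = P_S(z) - z`. Since `P_S` fixes `P_S(z)`, essential strong convexity applies to the
pair `(P_S(z), z)` and gives `f* - f(z) ≥ ⟪∇f(z), d⟫ + (l/2)‖d‖²`. The right-hand side is a quadratic
in `d` whose minimum is `-‖∇f(z)‖² / (2l)`, as `‖∇f(z) + l d‖² ≥ 0` shows. -/

open MeasureTheory ProbabilityTheory Real ENNReal

lemma eq_of_mem_of_forall_norm_sub_le {E : Type*} [NormedAddCommGroup E] {S : Set E} {w p : E}
    (hw : w ∈ S) (hp : ∀ y ∈ S, ‖w - p‖ ≤ ‖w - y‖) : p = w := by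
  have h := hp w hw
  rw [sub_self, norm_zero] at h
  exact (norm_sub_eq_zero_iff.mp (le_antisymm h (norm_nonneg _))).symm

lemma neg_sq_norm_le_two_mul_inner_add {E : Type*} [NormedAddCommGroup E] [InnerProductSpace ℝ E]
    (g d : E) (l : ℝ) : -‖g‖ ^ 2 ≤ 2 * l * (inner ℝ g d + l / 2 * ‖d‖ ^ 2) := by
  have h := sq_nonneg ‖g + l • d‖
  rw [norm_add_sq_real, inner_smul_right, norm_smul, mul_pow, Real.norm_eq_abs, sq_abs] at h
  linarith

theorem grad_sq_ge_two_l_gap_general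
    {n : ℕ}
    (f : EuclideanSpace ℝ (Fin n) → ℝ)
    (S : Set (EuclideanSpace ℝ (Fin n)))
    (fstar : ℝ) (hfstar : ∀ z ∈ S, f z = fstar)
    (PS : EuclideanSpace ℝ (Fin n) → EuclideanSpace ℝ (Fin n))
    (hPS : ∀ z, PS z ∈ S ∧ ∀ y ∈ S, ‖z - PS z‖ ≤ ‖z - y‖)
    (l : ℝ) (hl : 0 < l)
    (hesc : ∀ z y, PS z = PS y →
      f z - f y ≥ (inner ℝ (gradient f y) (z - y) : ℝ) + l / 2 * ‖z - y‖ ^ 2) :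
    ∀ z : EuclideanSpace ℝ (Fin n),
      ‖gradient f z‖ ^ 2 ≥ 2 * l * (f z - fstar) := by
  intro z
  obtain ⟨hPSz, -⟩ := hPS z
  have hfix : PS (PS z) = PS z := eq_of_mem_of_forall_norm_sub_le hPSz (hPS (PS z)).2
  have hgap := hesc (PS z) z hfix
  rw [hfstar _ hPSz] at hgap
  have hquad := neg_sq_norm_le_two_mul_inner_add (gradient f z) (PS z - z) l
  have hscaled := mul_le_mul_of_nonneg_left hgap (by positivity : 0 ≤ 2 * l)
  linarith

theorem grad_sq_ge_two_l_gap
    {n : ℕ}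
    (f : EuclideanSpace ℝ (Fin n) → ℝ)
    (hf_conv : ConvexOn ℝ Set.univ f)
    (hf_smooth : ContDiff ℝ 1 f)
    (S : Set (EuclideanSpace ℝ (Fin n)))
    (hS : S = {z | ∀ y, f z ≤ f y}) (hS_ne : S.Nonempty) (hS_closed : IsClosed S)
    (fstar : ℝ) (hfstar : ∀ z ∈ S, f z = fstar)
    (PS : EuclideanSpace ℝ (Fin n) → EuclideanSpace ℝ (Fin n))
    (hPS : ∀ z, PS z ∈ S ∧ ∀ y ∈ S, ‖z - PS z‖ ≤ ‖z - y‖)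
    (l : ℝ) (hl : 0 < l)
    (hesc : ∀ z y, PS z = PS y →
      f z - f y ≥ (inner ℝ (gradient f y) (z - y) : ℝ) + l / 2 * ‖z - y‖ ^ 2) :
    ∀ z : EuclideanSpace ℝ (Fin n),
      ‖gradient f z‖ ^ 2 ≥ 2 * l * (f z - fstar) :=
  grad_sq_ge_two_l_gap_general f S fstar hfstar PS hPS l hl hesc
end

section
/- Let A be an m×n random matrix whose entries are i.i.d. standard Gaussian N(0,1) random variables, and let A_{·i} denote its i-th column. Then for every i = 1,…,n, E(‖AᵀA_{·i}‖₂) ≤ m + √((n−1)·m). -/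
open MeasureTheory ProbabilityTheory Real ENNReal

/-! Split off the diagonal term: with `g = ‖A_{·i}‖²` and `h = ∑_{j ≠ i} ⟨A_{·j}, A_{·i}⟩²` we have
`‖AᵀA_{·i}‖ = √(g² + h) ≤ g + √h`, and `E √h ≤ √(E h)` by Jensen. Clearly `E g = m`. For `j ≠ i`
the products `A_{rj} A_{sj}` and `A_{ri} A_{si}` are independent, so
`E ⟨A_{·j}, A_{·i}⟩² = ∑_{r,s} E[A_{rj} A_{sj}] E[A_{ri} A_{si}] = ∑_{r,s} δ_{rs} = m`,
whence `E h = (n - 1) m`. -/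

namespace ProbabilityTheory

variable {Ω : Type*} [MeasurableSpace Ω] {P : Measure Ω}

lemma HasLaw.of_map_eq {𝓧 : Type*} [MeasurableSpace 𝓧] {X : Ω → 𝓧} {μ : Measure 𝓧} [NeZero μ]
    (h : P.map X = μ) : HasLaw X μ P :=
  ⟨.of_map_ne_zero (h ▸ NeZero.ne μ), h⟩

section

variable {X : Ω → ℝ} {μ : ℝ} {v : NNReal}

lemma HasLaw.memLp_of_gaussianReal (hX : HasLaw X (gaussianReal μ v) P) {p : ℝ≥0∞}
    (hp : p ≠ ∞) : MemLp X p P := by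
  have h := memLp_id_gaussianReal' (μ := μ) (v := v) p hp
  rwa [← hX.map_eq, memLp_map_measure_iff (by rw [hX.map_eq]; fun_prop) hX.aemeasurable] at h

lemma HasLaw.integral_of_gaussianReal (hX : HasLaw X (gaussianReal μ v) P) :
    ∫ ω, X ω ∂P = μ :=
  hX.integral_eq.trans integral_id_gaussianReal

lemma HasLaw.integral_sq_of_gaussianReal (hX : HasLaw X (gaussianReal μ v) P) :
    ∫ ω, X ω ^ 2 ∂P = μ ^ 2 + v := by
  have := hX.isProbabilityMeasure
  have hvar := hX.variance_eq
  rw [variance_id_gaussianReal,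
    variance_eq_sub (hX.memLp_of_gaussianReal (p := 2) ENNReal.ofNat_ne_top),
    hX.integral_of_gaussianReal] at hvar
  simp only [Pi.pow_apply] at hvar
  linarith

lemma HasLaw.integrable_mul_of_gaussianReal {Y : Ω → ℝ} {μ' : ℝ} {v' : NNReal}
    (hX : HasLaw X (gaussianReal μ v) P) (hY : HasLaw Y (gaussianReal μ' v') P) :
    Integrable (X * Y) P :=
  (hX.memLp_of_gaussianReal (p := 2) ENNReal.ofNat_ne_top).integrable_mul
    (hY.memLp_of_gaussianReal (p := 2) ENNReal.ofNat_ne_top)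

end

variable {ι : Type*} {X : ι → Ω → ℝ}

lemma integral_mul_of_iIndepFun_gaussianReal [DecidableEq ι]
    (hX : ∀ k, HasLaw (X k) (gaussianReal 0 1) P) (hind : iIndepFun X P) (k l : ι) :
    ∫ ω, X k ω * X l ω ∂P = if k = l then 1 else 0 := by
  split_ifs with hkl
  · subst hkl
    simpa [← sq] using (hX k).integral_sq_of_gaussianReal
  · have := (hind.indepFun hkl).integral_mul_eq_mul_integral
      (hX k).aemeasurable.aestronglyMeasurable (hX l).aemeasurable.aestronglyMeasurable
    simpa [(hX k).integral_of_gaussianReal] using this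

lemma integral_sq_sum_mul_of_iIndepFun_gaussianReal {κ : Type*} [Fintype κ]
    (hX : ∀ k, HasLaw (X k) (gaussianReal 0 1) P) (hind : iIndepFun X P)
    {a b : κ → ι} (ha : a.Injective) (hb : b.Injective) (hab : ∀ r s, a r ≠ b s) :
    Integrable (fun ω ↦ (∑ r, X (a r) ω * X (b r) ω) ^ 2) P ∧
      ∫ ω, (∑ r, X (a r) ω * X (b r) ω) ^ 2 ∂P = Fintype.card κ := by
  classical
  have hexpand : (fun ω ↦ (∑ r, X (a r) ω * X (b r) ω) ^ 2) =
      fun ω ↦ ∑ r, ∑ s, (X (a r) * X (a s) * (X (b r) * X (b s))) ω := by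
    ext ω
    simp only [sq, Finset.sum_mul_sum, Pi.mul_apply]
    exact Finset.sum_congr rfl fun r _ ↦ Finset.sum_congr rfl fun s _ ↦ by ring
  have hterm : ∀ r s, Integrable (X (a r) * X (a s) * (X (b r) * X (b s))) P ∧
      ∫ ω, (X (a r) * X (a s) * (X (b r) * X (b s))) ω ∂P = if r = s then 1 else 0 := by
    intro r s
    have hindep := hind.indepFun_mul_mul₀ (fun k ↦ (hX k).aemeasurable)
      (a r) (a s) (b r) (b s) (hab r r) (hab r s) (hab s r) (hab s s)
    refine ⟨hindep.integrable_mul ((hX _).integrable_mul_of_gaussianReal (hX _))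
      ((hX _).integrable_mul_of_gaussianReal (hX _)), ?_⟩
    rw [hindep.integral_mul_eq_mul_integral
      ((hX _).integrable_mul_of_gaussianReal (hX _)).aestronglyMeasurable
      ((hX _).integrable_mul_of_gaussianReal (hX _)).aestronglyMeasurable]
    simp only [Pi.mul_apply, integral_mul_of_iIndepFun_gaussianReal hX hind, ha.eq_iff,
      hb.eq_iff, mul_ite, mul_one, mul_zero]
    split_ifs <;> rfl
  have hint : ∀ r, Integrable (fun ω ↦ ∑ s, (X (a r) * X (a s) * (X (b r) * X (b s))) ω) P :=
    fun r ↦ integrable_finsetSum _ fun s _ ↦ (hterm r s).1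
  rw [hexpand, integral_finsetSum _ fun r _ ↦ hint r]
  refine ⟨integrable_finsetSum _ fun r _ ↦ hint r, ?_⟩
  calc ∑ r, ∫ ω, ∑ s, (X (a r) * X (a s) * (X (b r) * X (b s))) ω ∂P
      = ∑ r : κ, ∑ s : κ, if r = s then (1 : ℝ) else 0 := by
        refine Finset.sum_congr rfl fun r _ ↦ ?_
        rw [integral_finsetSum _ fun s _ ↦ (hterm r s).1]
        exact Finset.sum_congr rfl fun s _ ↦ (hterm r s).2
    _ = Fintype.card κ := by simp

end ProbabilityTheory

lemma Real.sqrt_sq_add_le {a b : ℝ} (ha : 0 ≤ a) (hb : 0 ≤ b) : √(a ^ 2 + b) ≤ a + √b :=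
  Real.sqrt_le_iff.mpr ⟨by positivity, by nlinarith [Real.sq_sqrt hb, Real.sqrt_nonneg b]⟩

lemma Real.sqrt_le_one_add_abs (x : ℝ) : √x ≤ 1 + |x| :=
  Real.sqrt_le_iff.mpr ⟨by positivity, by nlinarith [abs_nonneg x, le_abs_self x]⟩

namespace MeasureTheory

variable {Ω : Type*} [MeasurableSpace Ω] {P : Measure Ω} {f : Ω → ℝ}

lemma Integrable.sqrt [IsFiniteMeasure P] (hf : Integrable f P) :
    Integrable (fun ω ↦ √(f ω)) P := by
  refine ((integrable_const 1).add hf.abs).mono'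
    (continuous_sqrt.comp_aestronglyMeasurable hf.aestronglyMeasurable) (ae_of_all _ fun ω ↦ ?_)
  rw [Real.norm_of_nonneg (Real.sqrt_nonneg _)]
  exact Real.sqrt_le_one_add_abs _

lemma integral_sqrt_le_sqrt_integral [IsProbabilityMeasure P] (hf : Integrable f P)
    (hf₀ : 0 ≤ᵐ[P] f) : ∫ ω, √(f ω) ∂P ≤ √(∫ ω, f ω ∂P) :=
  Real.strictConcaveOn_sqrt.concaveOn.le_map_integral continuous_sqrt.continuousOn isClosed_Ici
    hf₀ hf hf.sqrt

lemma integral_sqrt_sq_add_le [IsProbabilityMeasure P] {g h : Ω → ℝ} (hg : Integrable g P)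
    (hg₀ : 0 ≤ g) (hh : Integrable h P) (hh₀ : 0 ≤ h) :
    ∫ ω, √(g ω ^ 2 + h ω) ∂P ≤ ∫ ω, g ω ∂P + √(∫ ω, h ω ∂P) :=
  calc ∫ ω, √(g ω ^ 2 + h ω) ∂P
      ≤ ∫ ω, g ω + √(h ω) ∂P :=
        integral_mono_of_nonneg (ae_of_all _ fun _ ↦ Real.sqrt_nonneg _) (hg.add hh.sqrt)
          (ae_of_all _ fun ω ↦ Real.sqrt_sq_add_le (hg₀ ω) (hh₀ ω))
    _ = ∫ ω, g ω ∂P + ∫ ω, √(h ω) ∂P := integral_add hg hh.sqrt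
    _ ≤ ∫ ω, g ω ∂P + √(∫ ω, h ω ∂P) := by
        grw [integral_sqrt_le_sqrt_integral hh (ae_of_all _ hh₀)]

end MeasureTheory

theorem gaussian_matrix_column_norm_expectation_general
    {m n : ℕ}
    {Ω : Type} [MeasureSpace Ω] [IsProbabilityMeasure (ℙ : Measure Ω)]
    (A : Ω → Matrix (Fin m) (Fin n) ℝ)
    (hdist : ∀ i j, Measure.map (fun ω => A ω i j) ℙ = gaussianReal 0 1)
    (hindep : iIndepFun
      (fun (p : Fin m × Fin n) ω => A ω p.1 p.2) ℙ) :
    ∀ i : Fin n,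
      (∫ ω, Real.sqrt (∑ j, (∑ r, A ω r j * A ω r i) ^ 2)) ≤
        m + Real.sqrt (((n : ℝ) - 1) * m) := by
  intro i
  have hlaw : ∀ p : Fin m × Fin n, HasLaw (fun ω ↦ A ω p.1 p.2) (gaussianReal 0 1) :=
    fun p ↦ .of_map_eq (hdist p.1 p.2)
  have hcol : ∀ j ∈ Finset.univ.erase i,
      Integrable (fun ω ↦ (∑ r, A ω r j * A ω r i) ^ 2) ∧
        ∫ ω, (∑ r, A ω r j * A ω r i) ^ 2 = m := fun j hj ↦ by
    simpa using integral_sq_sum_mul_of_iIndepFun_gaussianReal hlaw hindep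
      (a := fun r ↦ (r, j)) (b := fun r ↦ (r, i)) (fun _ _ h ↦ congrArg Prod.fst h)
      (fun _ _ h ↦ congrArg Prod.fst h) (by simp [Finset.ne_of_mem_erase hj])
  have hdiag : ∀ r, Integrable (fun ω ↦ A ω r i * A ω r i) :=
    fun r ↦ (hlaw (r, i)).integrable_mul_of_gaussianReal (hlaw (r, i))
  have hnorm : ∫ ω, ∑ r, A ω r i * A ω r i = m := by
    rw [integral_finsetSum _ fun r _ ↦ hdiag r, Finset.sum_congr rfl fun r _ ↦
      integral_mul_of_iIndepFun_gaussianReal hlaw hindep (r, i) (r, i)]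
    simp
  have hoff :
      ∫ ω, ∑ j ∈ Finset.univ.erase i, (∑ r, A ω r j * A ω r i) ^ 2 = ((n : ℝ) - 1) * m := by
    rw [integral_finsetSum _ fun j hj ↦ (hcol j hj).1,
      Finset.sum_congr rfl fun j hj ↦ (hcol j hj).2]
    simp [Nat.cast_sub i.pos]
  simp_rw [← Finset.add_sum_erase _ _ (Finset.mem_univ i)]
  grw [integral_sqrt_sq_add_le (integrable_finsetSum _ fun r _ ↦ hdiag r)
    (fun _ ↦ Finset.sum_nonneg fun r _ ↦ mul_self_nonneg _)
    (integrable_finsetSum _ fun j hj ↦ (hcol j hj).1)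
    (fun _ ↦ Finset.sum_nonneg fun j _ ↦ sq_nonneg _), hnorm, hoff]

theorem gaussian_matrix_column_norm_expectation
    {m n : ℕ}
    {Ω : Type} [MeasureSpace Ω] [IsProbabilityMeasure (ℙ : Measure Ω)]
    (A : Ω → Matrix (Fin m) (Fin n) ℝ)
    (hmeas : ∀ i j, Measurable fun ω => A ω i j)
    (hdist : ∀ i j, Measure.map (fun ω => A ω i j) ℙ = gaussianReal 0 1)
    (hindep : iIndepFun
      (fun (p : Fin m × Fin n) ω => A ω p.1 p.2) ℙ) :
    ∀ i : Fin n,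
      (∫ ω, Real.sqrt (∑ j, (∑ r, A ω r j * A ω r i) ^ 2)) ≤
        m + Real.sqrt (((n : ℝ) - 1) * m) :=
  gaussian_matrix_column_norm_expectation_general A hdist hindep
end
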